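/- Let L, M > 0 be integers and let (A_n) be a sequence of symmetric positive semidefinite integer matrices, where A_n has size m_n × m_n, every row and every column of A_n has at most L nonzero entries, and all entries satisfy |(A_n)_{ij}| ≤ M. Let μ_n := (1/m_n) ∑_{i=1}^{m_n} δ_{λᵢ(A_n)} be the normalized spectral measure of A_n, where λ₁(A_n), …, λ_{m_n}(A_n) are the eigenvalues of A_n with multiplicity. If (μ_n) converges weakly to a Borel probability measure μ on [0, 2LM], then lim_{n→∞} (dim ker A_n)/m_n = μ({0}). -/

import Mathlib

/-!
The nonzero eigenvalues of a positive semidefinite integer matrix have product at least `1`: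
up to sign this product is the coefficient of `X ^ (dim ker A)` in the integer characteristic
polynomial. Since Gershgorin bounds all eigenvalues by some `C > 1`, at most `m / K` of them
lie in `(0, C⁻¹ ^ K)`. Testing the weak convergence against the tent `max 0 (1 - x / ε)` with
`ε = C⁻¹ ^ K` thus traps the kernel fraction within `1 / K` below a quantity converging to
`∫ tent dμ`, which lies between `μ {0}` and `μ [-ε, ε] → μ {0}`.
-/

open MeasureTheory Filter Set Matrix
open scoped ENNReal

noncomputable def normalizedSpectralMeasure {m : ℕ} (A : Matrix (Fin m) (Fin m) ℝ)
    (hA : A.IsHermitian) : Measure ℝ :=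
  ((m : ℝ≥0∞))⁻¹ • ∑ i : Fin m, Measure.dirac (hA.eigenvalues i)

theorem Finset.sum_abs_le_of_card_support_le {ι : Type*} [Fintype ι] {f : ι → ℝ} {L : ℕ}
    {M : ℝ} (hM : 0 ≤ M) (hcard : (Finset.univ.filter fun i => f i ≠ 0).card ≤ L)
    (hf : ∀ i, |f i| ≤ M) : ∑ i, |f i| ≤ L * M := by
  classical
  calc ∑ i, |f i| = ∑ i ∈ Finset.univ.filter fun i => f i ≠ 0, |f i| := by
        rw [Finset.sum_filter_of_ne]; intro i _ hi h; simp [h] at hi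
    _ ≤ (Finset.univ.filter fun i => f i ≠ 0).card • M :=
        Finset.sum_le_card_nsmul _ _ _ fun i _ => hf i
    _ ≤ L * M := by rw [nsmul_eq_mul]; gcongr

theorem Matrix.IsHermitian.eigenvalues_le_of_row_bound {n : Type*} [Fintype n] [DecidableEq n]
    {A : Matrix n n ℝ} (hA : A.IsHermitian) {L : ℕ} {M : ℝ} (hM : 0 ≤ M)
    (hrow : ∀ i, (Finset.univ.filter fun j => A i j ≠ 0).card ≤ L)
    (hent : ∀ i j, |A i j| ≤ M) (i : n) :
    hA.eigenvalues i ≤ L * M := by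
  have hvec : Module.End.HasEigenvector (Matrix.toLin' A) (hA.eigenvalues i)
      (hA.eigenvectorBasis i) :=
    ⟨Module.End.mem_eigenspace_iff.mpr (by simpa using hA.mulVec_eigenvectorBasis i),
      fun h => hA.eigenvectorBasis.orthonormal.ne_zero i (by ext j; simp [h])⟩
  obtain ⟨k, hk⟩ := eigenvalue_mem_ball (Module.End.hasEigenvalue_of_hasEigenvector hvec)
  rw [Metric.mem_closedBall, Real.dist_eq] at hk
  simp only [Real.norm_eq_abs] at hk
  calc hA.eigenvalues i ≤ |A k k| + ∑ j ∈ Finset.univ.erase k, |A k j| := by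
        linarith [le_abs_self (hA.eigenvalues i - A k k), le_abs_self (A k k)]
    _ = ∑ j, |A k j| := Finset.add_sum_erase _ (fun j => |A k j|) (Finset.mem_univ k)
    _ ≤ L * M := Finset.sum_abs_le_of_card_support_le hM (hrow k) (hent k)

open Polynomial in
theorem Polynomial.coeff_prod_X_sub_C_card_eq_zero {R ι : Type*} [CommRing R] [Fintype ι]
    [DecidableEq R] (a : ι → R) :
    (∏ i, (X - C (a i))).coeff (Finset.univ.filter fun i => a i = 0).card =
      ∏ i ∈ Finset.univ.filter fun i => a i ≠ 0, -a i := by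
  rw [← Finset.prod_filter_mul_prod_filter_not Finset.univ fun i => a i = 0,
    Finset.prod_congr rfl fun i hi => by rw [(Finset.mem_filter.mp hi).2, map_zero, sub_zero],
    Finset.prod_const, coeff_X_pow_mul', if_pos le_rfl, Nat.sub_self, coeff_zero_eq_eval_zero,
    eval_prod]
  simp

theorem Matrix.IsHermitian.one_le_prod_abs_eigenvalues_of_int {n : Type*} [Fintype n]
    [DecidableEq n] {A : Matrix n n ℝ} (hA : A.IsHermitian)
    (hint : ∀ i j, ∃ z : ℤ, A i j = z) :
    1 ≤ ∏ i ∈ Finset.univ.filter fun i => hA.eigenvalues i ≠ 0, |hA.eigenvalues i| := by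
  obtain ⟨B, rfl⟩ : ∃ B : Matrix n n ℤ, B.map (Int.castRingHom ℝ) = A :=
    ⟨fun i j => (hint i j).choose, by ext i j; exact (hint i j).choose_spec.symm⟩
  set k := (Finset.univ.filter fun i => hA.eigenvalues i = 0).card
  have hcoeff : ((B.charpoly.coeff k : ℤ) : ℝ) =
      ∏ i ∈ Finset.univ.filter fun i => hA.eigenvalues i ≠ 0, -hA.eigenvalues i := by
    rw [← eq_intCast (Int.castRingHom ℝ), ← Polynomial.coeff_map, ← charpoly_map,
      hA.charpoly_eq]
    simp only [RCLike.ofReal_real_eq_id, id_eq]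
    exact Polynomial.coeff_prod_X_sub_C_card_eq_zero hA.eigenvalues
  have hne : B.charpoly.coeff k ≠ 0 := by
    rw [← Int.cast_ne_zero (α := ℝ), hcoeff, Finset.prod_ne_zero_iff]
    exact fun i hi => neg_ne_zero.mpr (Finset.mem_filter.mp hi).2
  calc (1 : ℝ) ≤ |((B.charpoly.coeff k : ℤ) : ℝ)| := by exact_mod_cast Int.one_le_abs hne
    _ = _ := by rw [hcoeff, Finset.abs_prod]; simp only [abs_neg]

theorem Matrix.IsHermitian.finrank_ker_mulVecLin {𝕜 n : Type*} [RCLike 𝕜] [Fintype n]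
    [DecidableEq n] {A : Matrix n n 𝕜} (hA : A.IsHermitian) :
    Module.finrank 𝕜 (LinearMap.ker A.mulVecLin) =
      (Finset.univ.filter fun i => hA.eigenvalues i = 0).card := by
  have hrank := LinearMap.finrank_range_add_finrank_ker A.mulVecLin
  rw [← Matrix.rank, hA.rank_eq_card_non_zero_eigs, Fintype.card_subtype,
    Module.finrank_pi, Fintype.card] at hrank
  have := Finset.card_filter_add_card_filter_not (s := Finset.univ)
    fun i => hA.eigenvalues i = 0
  simp only [ne_eq] at hrank
  omega

noncomputable def tent (ε x : ℝ) : ℝ := max 0 (1 - x / ε)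

theorem continuous_tent (ε : ℝ) : Continuous (tent ε) := by
  unfold tent; fun_prop

@[simp] theorem tent_zero (ε : ℝ) : tent ε 0 = 1 := by simp [tent]

theorem tent_nonneg (ε x : ℝ) : 0 ≤ tent ε x := le_max_left _ _

theorem tent_le_one {ε x : ℝ} (hε : 0 < ε) (hx : 0 ≤ x) : tent ε x ≤ 1 :=
  max_le zero_le_one (by linarith [div_nonneg hx hε.le])

theorem tent_eq_zero {ε x : ℝ} (hε : 0 < ε) (hx : ε ≤ x) : tent ε x = 0 :=
  max_eq_left (by linarith [(one_le_div hε).mpr hx])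

theorem tent_le_ite_add_ite {ε x : ℝ} (hε : 0 < ε) (hx : 0 ≤ x) :
    tent ε x ≤ (if x = 0 then 1 else 0) + if x ≠ 0 ∧ x < ε then 1 else 0 := by
  by_cases h0 : x = 0
  · simp [h0]
  by_cases hlt : x < ε
  · simp [h0, hlt, tent_le_one hε hx]
  · simp [h0, hlt, tent_eq_zero hε (not_lt.mp hlt)]

section FiniteFamily

variable {ι : Type*} [Fintype ι]

theorem card_eq_zero_le_sum_tent (lam : ι → ℝ) (ε : ℝ) :
    ((Finset.univ.filter fun i => lam i = 0).card : ℝ) ≤ ∑ i, tent ε (lam i) := by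
  rw [← Finset.sum_boole]
  gcongr with i
  split_ifs with h
  · simp [h]
  · exact tent_nonneg ε (lam i)

theorem sum_tent_le_card {lam : ι → ℝ} (hlam : ∀ i, 0 ≤ lam i) {ε : ℝ} (hε : 0 < ε) :
    ∑ i, tent ε (lam i) ≤ ((Finset.univ.filter fun i => lam i = 0).card : ℝ) +
      (Finset.univ.filter fun i => lam i ≠ 0 ∧ lam i < ε).card := by
  rw [← Finset.sum_boole, ← Finset.sum_boole, ← Finset.sum_add_distrib]
  exact Finset.sum_le_sum fun i _ => tent_le_ite_add_ite hε (hlam i)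

theorem mul_card_filter_lt_inv_pow_le_card {lam : ι → ℝ} {C : ℝ} (hC : 1 < C)
    (hlam : ∀ i, 0 ≤ lam i) (hle : ∀ i, lam i ≤ C)
    (hprod : 1 ≤ ∏ i ∈ Finset.univ.filter fun i => lam i ≠ 0, lam i) (K : ℕ) :
    K * (Finset.univ.filter fun i => lam i ≠ 0 ∧ lam i < C⁻¹ ^ K).card ≤
      Fintype.card ι := by
  classical
  set s := Finset.univ.filter fun i => lam i ≠ 0
  set t := Finset.univ.filter fun i => lam i ≠ 0 ∧ lam i < C⁻¹ ^ K
  have hts : t ⊆ s := fun i hi => by simp_all [s, t]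
  have hC0 : 0 < C := zero_lt_one.trans hC
  have hbound : 1 ≤ C ^ Fintype.card ι * (C⁻¹ ^ K) ^ t.card := calc
    1 ≤ ∏ i ∈ s, lam i := hprod
    _ = (∏ i ∈ s \ t, lam i) * ∏ i ∈ t, lam i := (Finset.prod_sdiff hts).symm
    _ ≤ C ^ (s \ t).card * (C⁻¹ ^ K) ^ t.card := by
      gcongr
      · exact Finset.prod_nonneg fun i _ => hlam i
      · simpa using Finset.prod_le_prod (fun i _ => hlam i) fun i (_ : i ∈ s \ t) => hle i
      · simpa using Finset.prod_le_prod (fun i _ => hlam i)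
          fun i (hi : i ∈ t) => (Finset.mem_filter.mp hi).2.2.le
    _ ≤ C ^ Fintype.card ι * (C⁻¹ ^ K) ^ t.card := by
      gcongr
      · exact hC.le
      · exact Finset.card_le_univ _
  rw [← pow_mul, inv_pow, ← div_eq_mul_inv, one_le_div (by positivity)] at hbound
  exact (pow_le_pow_iff_right₀ hC).mp hbound

end FiniteFamily

theorem normalizedSpectralMeasure_restrict_eq_self {m : ℕ} {A : Matrix (Fin m) (Fin m) ℝ}
    (hA : A.IsHermitian) {S : Set ℝ} (hS : ∀ i, hA.eigenvalues i ∈ S) :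
    (normalizedSpectralMeasure A hA).restrict S = normalizedSpectralMeasure A hA := by
  refine Measure.restrict_eq_self_of_ae_mem (ae_iff.mpr ?_)
  simp [normalizedSpectralMeasure, Measure.dirac_apply, hS]

theorem integral_normalizedSpectralMeasure {m : ℕ} {A : Matrix (Fin m) (Fin m) ℝ}
    (hA : A.IsHermitian) (f : ℝ → ℝ) :
    ∫ x, f x ∂normalizedSpectralMeasure A hA = (∑ i, f (hA.eigenvalues i)) / m := by
  rw [normalizedSpectralMeasure, integral_smul_measure,
    integral_finsetSum_measure fun i _ => integrable_dirac enorm_lt_top]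
  simp [integral_dirac, div_eq_inv_mul]

theorem Matrix.PosSemidef.integral_tent_mem_Icc {m : ℕ} {A : Matrix (Fin m) (Fin m) ℝ}
    (hA : A.PosSemidef) (hint : ∀ i j, ∃ z : ℤ, A i j = z) {C : ℝ} (hC : 1 < C)
    (hle : ∀ i, hA.isHermitian.eigenvalues i ≤ C) {K : ℕ} (hK : 0 < K) :
    ∫ x, tent (C⁻¹ ^ K) x ∂normalizedSpectralMeasure A hA.isHermitian ∈
      Icc ((Module.finrank ℝ (LinearMap.ker A.mulVecLin) : ℝ) / m)
        ((Module.finrank ℝ (LinearMap.ker A.mulVecLin) : ℝ) / m + 1 / K) := by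
  set lam := hA.isHermitian.eigenvalues
  have hlam : ∀ i, 0 ≤ lam i := hA.eigenvalues_nonneg
  have hprod : 1 ≤ ∏ i ∈ Finset.univ.filter fun i => lam i ≠ 0, lam i :=
    (hA.isHermitian.one_le_prod_abs_eigenvalues_of_int hint).trans_eq
      (Finset.prod_congr rfl fun i _ => abs_of_nonneg (hlam i))
  have hsmall :
      (K : ℝ) * (Finset.univ.filter fun i => lam i ≠ 0 ∧ lam i < C⁻¹ ^ K).card ≤ m := by
    simpa using
      (Nat.cast_le (α := ℝ)).mpr (mul_card_filter_lt_inv_pow_le_card hC hlam hle hprod K)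
  rw [integral_normalizedSpectralMeasure, hA.isHermitian.finrank_ker_mulVecLin]
  constructor
  · gcongr
    exact card_eq_zero_le_sum_tent lam _
  · calc (∑ i, tent (C⁻¹ ^ K) (lam i)) / m
        ≤ (((Finset.univ.filter fun i => lam i = 0).card : ℝ) +
          (Finset.univ.filter fun i => lam i ≠ 0 ∧ lam i < C⁻¹ ^ K).card) / m := by
          gcongr
          exact sum_tent_le_card hlam (by positivity)
      _ ≤ ((Finset.univ.filter fun i => lam i = 0).card : ℝ) / m + 1 / K := by
          rw [add_div]
          refine add_le_add le_rfl (div_le_of_le_mul₀ m.cast_nonneg (by positivity) ?_)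
          rwa [one_div, inv_mul_eq_div, le_div_iff₀ (by positivity), mul_comm]

theorem measure_singleton_le_setIntegral_tent (μ : Measure ℝ) [IsFiniteMeasure μ] {c : ℝ}
    (hc : 0 ≤ c) (ε : ℝ) : (μ {0}).toReal ≤ ∫ x in Icc 0 c, tent ε x ∂μ := calc
  (μ {0}).toReal = ∫ x in {0}, tent ε x ∂μ := by simp
  _ ≤ ∫ x in Icc 0 c, tent ε x ∂μ :=
    setIntegral_mono_set ((continuous_tent ε).integrableOn_Icc)
      (Eventually.of_forall fun x => tent_nonneg ε x)
      (ae_of_all _ fun x (hx : x = 0) => ⟨hx.ge, hx ▸ hc⟩)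

theorem setIntegral_tent_le_measure_Icc (μ : Measure ℝ) [IsFiniteMeasure μ] (c : ℝ) {ε : ℝ}
    (hε : 0 < ε) : ∫ x in Icc 0 c, tent ε x ∂μ ≤ (μ (Icc (-ε) ε)).toReal := calc
  ∫ x in Icc 0 c, tent ε x ∂μ ≤ ∫ x in Icc 0 c, (Icc (-ε) ε).indicator 1 x ∂μ := by
    refine setIntegral_mono_on (continuous_tent ε).integrableOn_Icc
      ((integrable_const 1).indicator measurableSet_Icc).integrableOn measurableSet_Icc
      fun x hx => ?_
    by_cases hxε : x ≤ ε
    · simpa [indicator_of_mem (show x ∈ Icc (-ε) ε from ⟨by linarith [hx.1], hxε⟩)]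
        using tent_le_one hε hx.1
    · simp [tent_eq_zero hε (le_of_not_ge hxε), hxε]
  _ ≤ (μ (Icc (-ε) ε)).toReal := by
    rw [setIntegral_indicator measurableSet_Icc]
    simpa [Measure.real] using ENNReal.toReal_mono (measure_ne_top μ _)
      (measure_mono inter_subset_right)

theorem tendsto_measure_Icc_neg_pow (μ : Measure ℝ) [IsFiniteMeasure μ] {r : ℝ}
    (hr₀ : 0 < r) (hr₁ : r < 1) :
    Tendsto (fun K : ℕ => (μ (Icc (-r ^ K) (r ^ K))).toReal) atTop (nhds (μ {0}).toReal) := by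
  simpa [Function.comp_def] using (ENNReal.tendsto_toReal (measure_ne_top μ {0})).comp
    ((tendsto_measure_Icc_nhdsWithin_right' μ 0).comp
      (tendsto_pow_atTop_nhdsWithin_zero_of_lt_one hr₀ hr₁))

theorem tendsto_of_forall_approx {α : Type*} {l : Filter α} {a : α → ℝ} {x : ℝ}
    (h : ∀ δ > 0, ∃ b : α → ℝ, ∃ β : ℝ, Tendsto b l (nhds β) ∧
      (∀ i, a i ≤ b i ∧ b i ≤ a i + δ) ∧ x ≤ β ∧ β ≤ x + δ) :
    Tendsto a l (nhds x) := by
  rw [tendsto_order]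
  constructor
  · intro u hu
    obtain ⟨b, β, hb, hab, hxβ, -⟩ := h ((x - u) / 3) (by linarith)
    filter_upwards [hb.eventually_const_lt (show u + (x - u) / 3 < β by linarith)] with i hi
    linarith [(hab i).2]
  · intro u hu
    obtain ⟨b, β, hb, hab, -, hβx⟩ := h ((u - x) / 3) (by linarith)
    filter_upwards [hb.eventually_lt_const (show β < u - (u - x) / 3 by linarith)] with i hi
    linarith [(hab i).1]

theorem normalized_kernel_dim_tendsto_atom_general
    (L M : ℕ)
    (m : ℕ → ℕ)
    (A : ∀ n, Matrix (Fin (m n)) (Fin (m n)) ℝ)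
    (hpsd : ∀ n, (A n).PosSemidef)
    (hint : ∀ n i j, ∃ z : ℤ, A n i j = (z : ℝ))
    (hrow : ∀ n i, (Finset.univ.filter fun j => A n i j ≠ 0).card ≤ L)
    (hent : ∀ n i j, |A n i j| ≤ (M : ℝ))
    (μ : Measure ℝ) (hμprob : IsProbabilityMeasure μ)
    (hweak : ∀ f : ℝ → ℝ, ContinuousOn f (Set.Icc 0 (2 * (L : ℝ) * (M : ℝ))) →
      Filter.Tendsto
        (fun n => ∫ x in Set.Icc 0 (2 * (L : ℝ) * (M : ℝ)), f x
          ∂(normalizedSpectralMeasure (A n) (hpsd n).isHermitian))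
        Filter.atTop
        (nhds (∫ x in Set.Icc 0 (2 * (L : ℝ) * (M : ℝ)), f x ∂μ))) :
    Filter.Tendsto
      (fun n => (Module.finrank ℝ ↥(LinearMap.ker (A n).mulVecLin) : ℝ) / (m n : ℝ))
      Filter.atTop (nhds ((μ {0}).toReal)) := by
  have hLM : (0 : ℝ) ≤ L * M := by positivity
  -- any bound `C > 1` on the eigenvalues will do
  set C : ℝ := L * M + 2
  have hC : 1 < C := by simp only [C]; linarith
  have heig n i : (hpsd n).isHermitian.eigenvalues i ∈ Icc (0 : ℝ) (L * M) :=
    ⟨(hpsd n).eigenvalues_nonneg i,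
      (hpsd n).isHermitian.eigenvalues_le_of_row_bound M.cast_nonneg (hrow n) (hent n) i⟩
  have hrestrict n : (normalizedSpectralMeasure (A n) (hpsd n).isHermitian).restrict
      (Icc 0 (2 * (L : ℝ) * M)) = normalizedSpectralMeasure (A n) (hpsd n).isHermitian :=
    normalizedSpectralMeasure_restrict_eq_self _ fun i =>
      Icc_subset_Icc_right (by linarith) (heig n i)
  refine tendsto_of_forall_approx fun δ hδ => ?_
  have hatom := tendsto_measure_Icc_neg_pow μ (by positivity) (inv_lt_one_of_one_lt₀ hC)
  obtain ⟨K, hK, hKδ, hμK⟩ : ∃ K : ℕ, 0 < K ∧ 1 / (K : ℝ) ≤ δ ∧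
      (μ (Icc (-C⁻¹ ^ K) (C⁻¹ ^ K))).toReal ≤ (μ {0}).toReal + δ :=
    ((eventually_gt_atTop 0).and ((tendsto_one_div_atTop_nhds_zero_nat.eventually_le_const hδ).and
      (hatom.eventually_le_const (lt_add_of_pos_right _ hδ)))).exists
  refine ⟨_, _, hweak (tent (C⁻¹ ^ K)) (continuous_tent _).continuousOn, fun n => ?_,
    measure_singleton_le_setIntegral_tent μ (by positivity) _,
    (setIntegral_tent_le_measure_Icc μ _ (by positivity)).trans hμK⟩
  rw [hrestrict]
  obtain ⟨hlow, hup⟩ := (hpsd n).integral_tent_mem_Icc (hint n) hC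
    (fun i => (heig n i).2.trans (by linarith)) hK
  exact ⟨hlow, hup.trans (by linarith)⟩

/-- Let `(A n)` be symmetric positive semidefinite integer matrices of size `m n`, with at
most `L` nonzero entries in each row and column and all entries bounded by `M` in absolute
value. If their normalized spectral measures converge weakly to a probability measure `μ`
on `[0, 2LM]`, then the normalized kernel dimensions converge to `μ({0})`. -/
theorem normalized_kernel_dim_tendsto_atom
    (L M : ℕ) (hL : 0 < L) (hM : 0 < M)
    (m : ℕ → ℕ) (hm : ∀ n, 0 < m n)
    (A : ∀ n, Matrix (Fin (m n)) (Fin (m n)) ℝ)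
    (hpsd : ∀ n, (A n).PosSemidef)
    (hint : ∀ n i j, ∃ z : ℤ, A n i j = (z : ℝ))
    (hrow : ∀ n i, (Finset.univ.filter fun j => A n i j ≠ 0).card ≤ L)
    (hcol : ∀ n j, (Finset.univ.filter fun i => A n i j ≠ 0).card ≤ L)
    (hent : ∀ n i j, |A n i j| ≤ (M : ℝ))
    (μ : Measure ℝ) (hμprob : IsProbabilityMeasure μ)
    (hμsupp : μ (Set.Icc 0 (2 * (L : ℝ) * (M : ℝ)))ᶜ = 0)
    (hweak : ∀ f : ℝ → ℝ, ContinuousOn f (Set.Icc 0 (2 * (L : ℝ) * (M : ℝ))) →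
      Filter.Tendsto
        (fun n => ∫ x in Set.Icc 0 (2 * (L : ℝ) * (M : ℝ)), f x
          ∂(normalizedSpectralMeasure (A n) (hpsd n).isHermitian))
        Filter.atTop
        (nhds (∫ x in Set.Icc 0 (2 * (L : ℝ) * (M : ℝ)), f x ∂μ))) :
    Filter.Tendsto
      (fun n => (Module.finrank ℝ ↥(LinearMap.ker (A n).mulVecLin) : ℝ) / (m n : ℝ))
      Filter.atTop (nhds ((μ {0}).toReal)) :=
  normalized_kernel_dim_tendsto_atom_general L M m A hpsd hint hrow hent μ hμprob hweak
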